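/- arXiv:2408.04445 — 4 statements merged into one kernel-verified Lean document; each statement's English description precedes it below -/
import Mathlib

section
/- The number of S-permutation matrices of size n²×n² equals (n!)^{2n}. -/
/-- The index `s*n + k` of the `n² × n²` matrix corresponding to block
coordinate `s` and within-block coordinate `k`. -/
def idx (n : ℕ) (s k : Fin n) : Fin (n ^ 2) :=
  ⟨s.val * n + k.val, by
    have hs := s.isLt
    have hk := k.isLt
    rw [pow_two]
    nlinarith⟩

/-- A matrix is binary if all its entries are `0` or `1`. -/
def Binary01 {α β : Type*} (A : α → β → ℕ) : Prop :=
  ∀ i j, A i j = 0 ∨ A i j = 1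

/-- An S-permutation matrix: a binary `n² × n²` permutation matrix
(exactly one `1` in every row and every column) such that each `n × n`
block `A_{st}` (rows `sn,…,sn+n−1`, columns `tn,…,tn+n−1`) contains
exactly one entry equal to `1`. -/
def IsSPerm (n : ℕ) (A : Fin (n ^ 2) → Fin (n ^ 2) → ℕ) : Prop :=
  Binary01 A ∧
  (∀ i, ∃! j, A i j = 1) ∧
  (∀ j, ∃! i, A i j = 1) ∧
  (∀ s t : Fin n, ∃! kl : Fin n × Fin n, A (idx n s kl.1) (idx n t kl.2) = 1)


/-! Reading an index of `Fin (n ^ 2)` as a pair (block, offset), an S-permutation matrix is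
the matrix of a permutation `σ` of `Fin n × Fin n` such that, for every block row `s`, the map
`k ↦ (σ (s, k)).1` is a bijection `π s`. Every such `σ` is uniquely of the shape
`(s, k) ↦ (π s k, ρ (π s k) s)` with all `ρ t` bijections as well, so choosing the `n`
permutations `π s` and the `n` permutations `ρ t` freely gives `(n!) ^ n * (n!) ^ n`. -/

open Equiv Function

section PermMatrix

variable {ι : Type*} [DecidableEq ι]

theorem permMatrix_apply_eq_ite (σ : Perm ι) (i j : ι) :
    σ.permMatrix ℕ i j = if σ i = j then 1 else 0 := by
  simp [PEquiv.toMatrix_apply, Equiv.toPEquiv_apply]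

theorem permMatrix_apply_eq_one_iff {σ : Perm ι} {i j : ι} :
    σ.permMatrix ℕ i j = 1 ↔ σ i = j := by
  simp only [permMatrix_apply_eq_ite, ite_eq_left_iff, zero_ne_one, imp_false, not_not]

theorem permMatrix_injective : Injective (fun σ : Perm ι => σ.permMatrix ℕ) := by
  intro σ τ h
  ext i
  have : τ.permMatrix ℕ i (σ i) = 1 := by
    rw [← show σ.permMatrix ℕ = τ.permMatrix ℕ from h, permMatrix_apply_eq_one_iff]
  exact (permMatrix_apply_eq_one_iff.1 this).symm

theorem binary01_and_existsUnique_iff_exists_permMatrix {A : ι → ι → ℕ} :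
    (Binary01 A ∧ (∀ i, ∃! j, A i j = 1) ∧ (∀ j, ∃! i, A i j = 1)) ↔
      ∃ σ : Perm ι, σ.permMatrix ℕ = A := by
  constructor
  · rintro ⟨hbin, hrow, hcol⟩
    choose f hf hf_unique using hrow
    have hf_bij : Bijective f := by
      refine (bijective_iff_existsUnique f).2 fun j => ?_
      obtain ⟨i, hi, hi_unique⟩ := hcol j
      exact ⟨i, (hf_unique i j hi).symm, fun i' hi' => hi_unique i' (hi' ▸ hf i')⟩
    refine ⟨ofBijective f hf_bij, funext₂ fun i j => ?_⟩
    rw [permMatrix_apply_eq_ite, ofBijective_apply]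
    rcases hbin i j with h | h
    · exact (if_neg fun hj => by simp [← hj, hf i] at h).trans h.symm
    · exact (if_pos (hf_unique i j h).symm).trans h.symm
  · rintro ⟨σ, rfl⟩
    refine ⟨fun i j => ?_,
      fun i => ⟨σ i, permMatrix_apply_eq_one_iff.2 rfl,
        fun j hj => (permMatrix_apply_eq_one_iff.1 hj).symm⟩,
      fun j => ⟨σ.symm j, permMatrix_apply_eq_one_iff.2 (σ.apply_symm_apply j),
        fun i hi => σ.eq_symm_apply.2 (permMatrix_apply_eq_one_iff.1 hi)⟩⟩
    rw [permMatrix_apply_eq_ite]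
    split_ifs <;> simp

end PermMatrix

section BlockPerm

variable {α β : Type*}

def IsBlockBijective (σ : Perm (α × β)) : Prop :=
  ∀ a, Bijective fun b => (σ (a, b)).1

theorem existsUnique_apply_eq_iff_existsUnique_fst (σ : Perm (α × β)) (a t : α) :
    (∃! p : β × β, σ (a, p.1) = (t, p.2)) ↔ ∃! b, (σ (a, b)).1 = t := by
  constructor
  · rintro ⟨⟨b, l⟩, hbl, hunique⟩
    refine ⟨b, by simp [hbl], fun b' hb' => ?_⟩
    exact congrArg Prod.fst (hunique (b', (σ (a, b')).2) (Prod.ext hb' rfl))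
  · rintro ⟨b, hb, hunique⟩
    refine ⟨(b, (σ (a, b)).2), Prod.ext hb rfl, fun ⟨b', l⟩ hbl => ?_⟩
    obtain rfl : b' = b := hunique b' (by simp [hbl])
    simp [hbl]

theorem isBlockBijective_iff (σ : Perm (α × β)) :
    IsBlockBijective σ ↔ ∀ a t, ∃! p : β × β, σ (a, p.1) = (t, p.2) := by
  simp only [IsBlockBijective, bijective_iff_existsUnique,
    existsUnique_apply_eq_iff_existsUnique_fst]

def shearPerm (π : α → β ≃ α) (ρ : α → α ≃ β) : Perm (α × β) :=
  (prodCongrRight π).trans ((prodComm α α).trans (prodCongrRight ρ))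

@[simp]
theorem shearPerm_apply (π : α → β ≃ α) (ρ : α → α ≃ β) (a : α) (b : β) :
    shearPerm π ρ (a, b) = (π a b, ρ (π a b) a) :=
  rfl

namespace IsBlockBijective

variable {σ : Perm (α × β)} (hσ : IsBlockBijective σ)

noncomputable def rowPerm (a : α) : β ≃ α :=
  ofBijective _ (hσ a)

@[simp]
theorem rowPerm_apply (a : α) (b : β) : hσ.rowPerm a b = (σ (a, b)).1 :=
  rfl

@[simp]
theorem rowPerm_symm_fst_apply (a : α) (b : β) : (hσ.rowPerm a).symm (σ (a, b)).1 = b :=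
  (hσ.rowPerm a).symm_apply_apply b

theorem apply_rowPerm_symm (a t : α) :
    σ (a, (hσ.rowPerm a).symm t) = (t, (σ (a, (hσ.rowPerm a).symm t)).2) :=
  Prod.ext ((hσ.rowPerm a).apply_symm_apply t) rfl

noncomputable def colPerm (t : α) : α ≃ β where
  toFun a := (σ (a, (hσ.rowPerm a).symm t)).2
  invFun l := (σ.symm (t, l)).1
  left_inv a := by
    dsimp only
    rw [← hσ.apply_rowPerm_symm, symm_apply_apply]
  right_inv l := by
    have hp : σ (σ.symm (t, l)) = (t, l) := σ.apply_symm_apply _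
    have hrow : (hσ.rowPerm (σ.symm (t, l)).1).symm t = (σ.symm (t, l)).2 := by
      rw [symm_apply_eq, rowPerm_apply, hp]
    simp only [hrow, hp]

@[simp]
theorem colPerm_apply (t a : α) : hσ.colPerm t a = (σ (a, (hσ.rowPerm a).symm t)).2 :=
  rfl

@[simp]
theorem rowPerm_shearPerm {π : α → β ≃ α} {ρ : α → α ≃ β}
    (h : IsBlockBijective (shearPerm π ρ)) : h.rowPerm = π :=
  funext fun _ => Equiv.ext fun _ => rfl

end IsBlockBijective

noncomputable def shearEquiv :
    (α → β ≃ α) × (α → α ≃ β) ≃ {σ : Perm (α × β) // IsBlockBijective σ} where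
  toFun p := ⟨shearPerm p.1 p.2, fun a => (p.1 a).bijective⟩
  invFun σ := (σ.2.rowPerm, σ.2.colPerm)
  left_inv := by
    rintro ⟨π, ρ⟩
    ext a b <;> simp
  right_inv := by
    rintro ⟨σ, hσ⟩
    ext ⟨a, b⟩ <;> simp

end BlockPerm

def idxEquiv (n : ℕ) : Fin n × Fin n ≃ Fin (n ^ 2) :=
  finProdFinEquiv.trans (finCongr (sq n).symm)

@[simp]
theorem idxEquiv_apply (n : ℕ) (s k : Fin n) : idxEquiv n (s, k) = idx n s k :=
  Fin.ext <| by simp [idxEquiv, idx, add_comm, mul_comm]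

def blockPermMatrix (n : ℕ) (σ : Perm (Fin n × Fin n)) : Fin (n ^ 2) → Fin (n ^ 2) → ℕ :=
  ((idxEquiv n).permCongr σ).permMatrix ℕ

theorem blockPermMatrix_injective (n : ℕ) : Injective (blockPermMatrix n) :=
  permMatrix_injective.comp (idxEquiv n).permCongr.injective

theorem blockPermMatrix_idx_eq_one_iff {n : ℕ} {σ : Perm (Fin n × Fin n)} {s k t l : Fin n} :
    blockPermMatrix n σ (idx n s k) (idx n t l) = 1 ↔ σ (s, k) = (t, l) := by
  rw [blockPermMatrix, permMatrix_apply_eq_one_iff, ← idxEquiv_apply, ← idxEquiv_apply,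
    permCongr_apply, symm_apply_apply, EmbeddingLike.apply_eq_iff_eq]

theorem setOf_isSPerm_eq_image (n : ℕ) :
    {A | IsSPerm n A} = blockPermMatrix n '' {σ | IsBlockBijective σ} := by
  ext A
  simp only [Set.mem_ofPred_eq, Set.mem_image]
  constructor
  · rintro ⟨hbin, hrow, hcol, hblock⟩
    obtain ⟨τ, rfl⟩ := binary01_and_existsUnique_iff_exists_permMatrix.1 ⟨hbin, hrow, hcol⟩
    obtain ⟨σ, rfl⟩ := (idxEquiv n).permCongr.surjective τ
    refine ⟨σ, (isBlockBijective_iff σ).2 fun s t => ?_, rfl⟩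
    simp only [← blockPermMatrix_idx_eq_one_iff]
    exact hblock s t
  · rintro ⟨σ, hσ, rfl⟩
    obtain ⟨hbin, hrow, hcol⟩ :=
      binary01_and_existsUnique_iff_exists_permMatrix.2 ⟨(idxEquiv n).permCongr σ, rfl⟩
    refine ⟨hbin, hrow, hcol, fun s t => ?_⟩
    simpa only [blockPermMatrix_idx_eq_one_iff] using (isBlockBijective_iff σ).1 hσ s t

theorem card_SPerm_general (n : ℕ) :
    Nat.card {A : Fin (n ^ 2) → Fin (n ^ 2) → ℕ // IsSPerm n A} =
      (Nat.factorial n) ^ (2 * n) := by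
  calc Nat.card {A : Fin (n ^ 2) → Fin (n ^ 2) → ℕ // IsSPerm n A}
      = Nat.card {σ : Perm (Fin n × Fin n) // IsBlockBijective σ} := by
        rw [← Set.coe_ofPred, setOf_isSPerm_eq_image,
          Nat.card_image_of_injective (blockPermMatrix_injective n)]
        rfl
    _ = Nat.card ((Fin n → Perm (Fin n)) × (Fin n → Perm (Fin n))) :=
        Nat.card_congr shearEquiv.symm
    _ = Nat.factorial n ^ (2 * n) := by
        simp [Nat.card_eq_fintype_card, Fintype.card_perm, two_mul, pow_add]

/-- The number of S-permutation matrices of size `n² × n²`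
equals `(n!)^(2n)`. -/
theorem card_SPerm (n : ℕ) (hn : 0 < n) :
    Nat.card {A : Fin (n ^ 2) → Fin (n ^ 2) → ℕ // IsSPerm n A} =
      (Nat.factorial n) ^ (2 * n) :=
  card_SPerm_general n
end

section
/- A square n²×n² matrix P with entries in {1,2,...,n²} is a Sudoku matrix if and only if there exist mutually disjoint S-permutation matrices A_1, A_2, ..., A_{n²} such that P = 1·A_1 + 2·A_2 + ... + n²·A_{n²}. -/
/-- Two binary matrices are disjoint if there is no position at which both
have the entry `1`. -/
def DisjointBin (n : ℕ) (A B : Fin (n ^ 2) → Fin (n ^ 2) → ℕ) : Prop :=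
  ∀ i j, ¬ (A i j = 1 ∧ B i j = 1)

/-- A Sudoku matrix: every row, every column and every `n × n` block is a
permutation of the elements of `Z_{n²} = {1,…,n²}`. -/
def IsSudoku (n : ℕ) (P : Fin (n ^ 2) → Fin (n ^ 2) → ℕ) : Prop :=
  (∀ i, Finset.image (P i) Finset.univ = Finset.Icc 1 (n ^ 2)) ∧
  (∀ j, Finset.image (fun i => P i j) Finset.univ = Finset.Icc 1 (n ^ 2)) ∧
  (∀ s t : Fin n,
    Finset.image (fun kl : Fin n × Fin n => P (idx n s kl.1) (idx n t kl.2))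
      Finset.univ = Finset.Icc 1 (n ^ 2))

/-! The `k`-th matrix of the decomposition marks where `P` takes the value `k + 1`: a weighted
sum of disjoint binary matrices determines its summands, so this is the only possible
decomposition. It consists of S-permutation matrices exactly when every value occurs once in
each row, column and block. -/

lemma image_eq_Icc_iff_forall_existsUnique {α : Type*} [Fintype α] [DecidableEq α]
    {N : ℕ} (hN : Fintype.card α = N) (f : α → ℕ) :
    Finset.image f Finset.univ = Finset.Icc 1 N ↔ ∀ k : Fin N, ∃! a, f a = k.val + 1 := by
  have hcard : (Finset.Icc 1 N).card = (Finset.univ : Finset α).card := by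
    rw [Nat.card_Icc, Finset.card_univ, hN, Nat.add_sub_cancel]
  constructor
  · intro him k
    have hinj : Set.InjOn f (Finset.univ : Finset α) :=
      Finset.injOn_of_card_image_eq (by rw [him, hcard])
    have hk : k.val + 1 ∈ Finset.image f Finset.univ := by
      rw [him, Finset.mem_Icc]; omega
    obtain ⟨a, -, ha⟩ := Finset.mem_image.mp hk
    exact ⟨a, ha, fun b hb => hinj (by simp) (by simp) (hb.trans ha.symm)⟩
  · intro huniq
    have hsub : Finset.Icc 1 N ⊆ Finset.image f Finset.univ := by
      intro v hv
      rw [Finset.mem_Icc] at hv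
      obtain ⟨a, ha, -⟩ := huniq ⟨v - 1, by omega⟩
      exact Finset.mem_image.mpr ⟨a, Finset.mem_univ a, by rw [ha, Fin.val_mk]; omega⟩
    exact (Finset.eq_of_subset_of_card_le hsub (hcard ▸ Finset.card_image_le)).symm

section LevelMatrix

variable {α β : Type*} {N : ℕ}

def levelMatrix (P : α → β → ℕ) (k : Fin N) : α → β → ℕ :=
  fun i j => if P i j = k.val + 1 then 1 else 0

@[simp]
lemma levelMatrix_eq_one_iff {P : α → β → ℕ} {k : Fin N} {i : α} {j : β} :
    levelMatrix P k i j = 1 ↔ P i j = k.val + 1 := by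
  simp [levelMatrix]

lemma binary01_levelMatrix (P : α → β → ℕ) (k : Fin N) : Binary01 (levelMatrix P k) := by
  intro i j
  unfold levelMatrix
  split_ifs <;> simp

lemma levelMatrix_disjoint (P : α → β → ℕ) {k l : Fin N} (hkl : k ≠ l) (i : α) (j : β) :
    ¬ (levelMatrix P k i j = 1 ∧ levelMatrix P l i j = 1) := by
  rw [levelMatrix_eq_one_iff, levelMatrix_eq_one_iff]
  exact fun ⟨hk, hl⟩ => hkl (Fin.ext (by omega))

lemma sum_mul_levelMatrix {P : α → β → ℕ} {i : α} {j : β} (hP : P i j ∈ Finset.Icc 1 N) :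
    ∑ k : Fin N, (k.val + 1) * levelMatrix P k i j = P i j := by
  rw [Finset.mem_Icc] at hP
  rw [Finset.sum_eq_single ⟨P i j - 1, by omega⟩]
  · simp [levelMatrix, Nat.sub_add_cancel hP.1]
  · intro k _ hk
    have : P i j ≠ k.val + 1 := fun h => hk (Fin.ext (by simp [h]))
    simp [levelMatrix, this]
  · simp

lemma eq_levelMatrix_of_eq_sum {A : Fin N → α → β → ℕ} {P : α → β → ℕ}
    (hA : ∀ k, Binary01 (A k))
    (hdisj : ∀ k l, k ≠ l → ∀ i j, ¬ (A k i j = 1 ∧ A l i j = 1))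
    (hsum : ∀ i j, P i j = ∑ k : Fin N, (k.val + 1) * A k i j) :
    A = levelMatrix P := by
  have hone : ∀ k i j, A k i j = 1 → P i j = k.val + 1 := by
    intro k i j hk
    rw [hsum, Finset.sum_eq_single k]
    · rw [hk, mul_one]
    · intro l _ hl
      rcases hA l i j with h | h
      · rw [h, mul_zero]
      · exact absurd ⟨h, hk⟩ (hdisj l k hl i j)
    · simp
  ext k i j
  rcases hA k i j with hzero | hk
  · rw [hzero, levelMatrix, if_neg]
    intro hPk
    obtain ⟨l, hl⟩ : ∃ l, A l i j = 1 := by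
      by_contra! h
      have hP0 : P i j = 0 := by
        rw [hsum]
        exact Finset.sum_eq_zero fun l _ => by rw [(hA l i j).resolve_right (h l), mul_zero]
      omega
    obtain rfl : l = k := Fin.ext (by have := hone l i j hl; omega)
    omega
  · rw [hk, levelMatrix, if_pos (hone k i j hk)]

end LevelMatrix

lemma isSudoku_iff_forall_isSPerm_levelMatrix (n : ℕ) (P : Fin (n ^ 2) → Fin (n ^ 2) → ℕ) :
    IsSudoku n P ↔ ∀ k : Fin (n ^ 2), IsSPerm n (levelMatrix P k) := by
  have hblock : Fintype.card (Fin n × Fin n) = n ^ 2 := by simp [pow_two]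
  simp only [IsSudoku, IsSPerm, binary01_levelMatrix, levelMatrix_eq_one_iff, true_and,
    image_eq_Icc_iff_forall_existsUnique (Fintype.card_fin _),
    image_eq_Icc_iff_forall_existsUnique hblock, forall_and]
  exact and_congr forall_comm
    (and_congr forall_comm ⟨fun h k s t => h s t k, fun h s t k => h k s t⟩)

theorem isSudoku_iff_sum_disjoint_sperm_general (n : ℕ)
    (P : Fin (n ^ 2) → Fin (n ^ 2) → ℕ) :
    IsSudoku n P ↔
      ∃ A : Fin (n ^ 2) → (Fin (n ^ 2) → Fin (n ^ 2) → ℕ),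
        (∀ k, IsSPerm n (A k)) ∧
        (∀ k l, k ≠ l → DisjointBin n (A k) (A l)) ∧
        (∀ i j, P i j = ∑ k : Fin (n ^ 2), (k.val + 1) * A k i j) := by
  constructor
  · intro hP
    refine ⟨levelMatrix P, (isSudoku_iff_forall_isSPerm_levelMatrix n P).1 hP,
      fun k l hkl => levelMatrix_disjoint P hkl, fun i j => ?_⟩
    have hPij : P i j ∈ Finset.Icc 1 (n ^ 2) :=
      hP.1 i ▸ Finset.mem_image_of_mem _ (Finset.mem_univ j)
    exact (sum_mul_levelMatrix hPij).symm
  · rintro ⟨A, hA, hdisj, hsum⟩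
    obtain rfl := eq_levelMatrix_of_eq_sum (fun k => (hA k).1) hdisj hsum
    exact (isSudoku_iff_forall_isSPerm_levelMatrix n P).2 hA

/-- A square `n² × n²` matrix `P` with entries in `{1,…,n²}` is
a Sudoku matrix if and only if there exist mutually disjoint S-permutation
matrices `A_1, …, A_{n²}` with `P = 1·A_1 + 2·A_2 + ⋯ + n²·A_{n²}`. -/
theorem isSudoku_iff_sum_disjoint_sperm (n : ℕ) (hn : 0 < n)
    (P : Fin (n ^ 2) → Fin (n ^ 2) → ℕ)
    (hP : ∀ i j, P i j ∈ Finset.Icc 1 (n ^ 2)) :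
    IsSudoku n P ↔
      ∃ A : Fin (n ^ 2) → (Fin (n ^ 2) → Fin (n ^ 2) → ℕ),
        (∀ k, IsSPerm n (A k)) ∧
        (∀ k l, k ≠ l → DisjointBin n (A k) (A l)) ∧
        (∀ i j, P i j = ∑ k : Fin (n ^ 2), (k.val + 1) * A k i j) :=
  isSudoku_iff_sum_disjoint_sperm_general n P
end

section
/- There exists a bijective map φ from Π_n to Σ_{n²} such that two matrices P, Q ∈ Π_n are disjoint if and only if φ(P) and φ(Q) are disjoint S-permutation matrices. -/
/-- `Π_n`: every row of the `(2n) × n` matrix is a permutation of `{1,…,n}`. -/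
def IsPiMatrix (n : ℕ) (M : Fin (2 * n) → Fin n → ℕ) : Prop :=
  ∀ i : Fin (2 * n), Finset.image (M i) Finset.univ = Finset.Icc 1 n

/-- Two `Π_n` matrices `C`, `D` are disjoint if there are no indices
`s, t ∈ {0,…,n−1}` such that the ordered pair `(c_{s,t}, c_{n+t,s})` equals
the ordered pair `(d_{s,t}, d_{n+t,s})`. -/
def PiDisjoint (n : ℕ) (C D : Fin (2 * n) → Fin n → ℕ) : Prop :=
  ¬ ∃ s t : Fin n,
    (C ⟨s.val, by have := s.isLt; omega⟩ t,
     C ⟨n + t.val, by have := t.isLt; omega⟩ s) =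
    (D ⟨s.val, by have := s.isLt; omega⟩ t,
     D ⟨n + t.val, by have := t.isLt; omega⟩ s)

namespace SPermAux

lemma div_idx {n : ℕ} (s k : Fin n) : (s.val * n + k.val) / n = s.val := by
  have hn : 0 < n := k.pos
  rw [Nat.mul_comm, Nat.mul_add_div hn, Nat.div_eq_of_lt k.isLt, Nat.add_zero]

lemma mod_idx {n : ℕ} (s k : Fin n) : (s.val * n + k.val) % n = k.val := by
  rw [Nat.mul_comm, Nat.mul_add_mod, Nat.mod_eq_of_lt k.isLt]

lemma idx_inj {n : ℕ} {s t k l : Fin n} (h : idx n s k = idx n t l) : s = t ∧ k = l := by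
  have h' : s.val * n + k.val = t.val * n + l.val := congrArg Fin.val h
  have h1 : s.val = t.val := by
    have a := div_idx s k; have b := div_idx t l
    rw [h'] at a; omega
  have h2 : k.val = l.val := by
    have a := mod_idx s k; have b := mod_idx t l
    rw [h'] at a; omega
  exact ⟨Fin.ext h1, Fin.ext h2⟩

lemma exists_idx {n : ℕ} (hn : 0 < n) (i : Fin (n ^ 2)) : ∃ s k : Fin n, i = idx n s k := by
  have hi : i.val < n * n := by rw [← pow_two]; exact i.isLt
  refine ⟨⟨i.val / n, Nat.div_lt_of_lt_mul (by rwa [Nat.mul_comm] at hi)⟩,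
    ⟨i.val % n, Nat.mod_lt _ hn⟩, ?_⟩
  apply Fin.ext
  show i.val = i.val / n * n + i.val % n
  rw [Nat.mul_comm]; exact (Nat.div_add_mod i.val n).symm

lemma pi_mem {n : ℕ} {M : Fin (2 * n) → Fin n → ℕ} (hM : IsPiMatrix n M)
    (r : Fin (2 * n)) (c : Fin n) : 1 ≤ M r c ∧ M r c ≤ n := by
  have : M r c ∈ Finset.Icc 1 n := by
    rw [← hM r]; exact Finset.mem_image_of_mem _ (Finset.mem_univ c)
  simpa using this

lemma pi_inj {n : ℕ} {M : Fin (2 * n) → Fin n → ℕ} (hM : IsPiMatrix n M)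
    (r : Fin (2 * n)) : Function.Injective (M r) := by
  have h : (Finset.univ.image (M r)).card = (Finset.univ : Finset (Fin n)).card := by
    rw [hM r]; simp
  have h2 := Finset.injOn_of_card_image_eq h
  intro a b hab
  exact h2 (Finset.mem_univ a) (Finset.mem_univ b) hab

lemma pi_surj {n : ℕ} {M : Fin (2 * n) → Fin n → ℕ} (hM : IsPiMatrix n M)
    (r : Fin (2 * n)) {m : ℕ} (h1 : 1 ≤ m) (h2 : m ≤ n) : ∃ c, M r c = m := by
  have : m ∈ Finset.image (M r) Finset.univ := by rw [hM r]; simp [h1, h2]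
  simpa using this

/-- Row index in `Fin (2*n)` from `s : Fin n`. -/
def rup {n : ℕ} (s : Fin n) : Fin (2 * n) := ⟨s.val, by have := s.isLt; omega⟩

/-- Row index `n + t` in `Fin (2*n)` from `t : Fin n`. -/
def rdn {n : ℕ} (t : Fin n) : Fin (2 * n) := ⟨n + t.val, by have := t.isLt; omega⟩

/-- The S-permutation matrix associated to a Π-matrix. -/
def toA (n : ℕ) (hn : 0 < n) (M : Fin (2 * n) → Fin n → ℕ) :
    Fin (n ^ 2) → Fin (n ^ 2) → ℕ := fun i j =>
  have hi : i.val / n < n := Nat.div_lt_of_lt_mul (by rw [← pow_two]; exact i.isLt)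
  have hj : j.val / n < n := Nat.div_lt_of_lt_mul (by rw [← pow_two]; exact j.isLt)
  if M (rup ⟨i.val / n, hi⟩) ⟨j.val / n, hj⟩ = i.val % n + 1 ∧
     M (rdn ⟨j.val / n, hj⟩) ⟨i.val / n, hi⟩ = j.val % n + 1 then 1 else 0

lemma toA_idx {n : ℕ} (hn : 0 < n) (M : Fin (2 * n) → Fin n → ℕ) (s k t l : Fin n) :
    toA n hn M (idx n s k) (idx n t l) =
      if M (rup s) t = k.val + 1 ∧ M (rdn t) s = l.val + 1 then 1 else 0 := by
  simp only [toA, idx, div_idx, mod_idx, Fin.eta]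


lemma toA_eq_one {n : ℕ} (hn : 0 < n) (M : Fin (2 * n) → Fin n → ℕ) (s k t l : Fin n) :
    toA n hn M (idx n s k) (idx n t l) = 1 ↔
      (M (rup s) t = k.val + 1 ∧ M (rdn t) s = l.val + 1) := by
  rw [toA_idx]
  split_ifs with h <;> simp [h]

lemma toA_sperm {n : ℕ} (hn : 0 < n) {M : Fin (2 * n) → Fin n → ℕ}
    (hM : IsPiMatrix n M) : IsSPerm n (toA n hn M) := by
  refine ⟨?_, ?_, ?_, ?_⟩
  · intro i j
    obtain ⟨s, k, rfl⟩ := exists_idx hn i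
    obtain ⟨t, l, rfl⟩ := exists_idx hn j
    rw [toA_idx]
    split_ifs <;> simp
  · -- rows
    intro i
    obtain ⟨s, k, rfl⟩ := exists_idx hn i
    obtain ⟨t, ht⟩ := pi_surj hM (rup s) (by omega : 1 ≤ k.val + 1) (by have := k.isLt; omega)
    have hm := pi_mem hM (rdn t) s
    refine ⟨idx n t ⟨M (rdn t) s - 1, by omega⟩, ?_, ?_⟩
    · exact (toA_eq_one hn M s k t _).mpr ⟨ht, by simp only [Fin.val_mk]; omega⟩
    · intro j hj
      obtain ⟨t', l', rfl⟩ := exists_idx hn j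
      rw [toA_eq_one] at hj
      have htt : t' = t := pi_inj hM (rup s) (by rw [hj.1, ht])
      subst htt
      congr 1
      apply Fin.ext
      have := hj.2
      simp only []
      omega
  · -- columns
    intro j
    obtain ⟨t, l, rfl⟩ := exists_idx hn j
    obtain ⟨s, hs⟩ := pi_surj hM (rdn t) (by omega : 1 ≤ l.val + 1) (by have := l.isLt; omega)
    have hm := pi_mem hM (rup s) t
    refine ⟨idx n s ⟨M (rup s) t - 1, by omega⟩, ?_, ?_⟩
    · exact (toA_eq_one hn M s _ t l).mpr ⟨by simp only [Fin.val_mk]; omega, hs⟩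
    · intro i hi
      obtain ⟨s', k', rfl⟩ := exists_idx hn i
      rw [toA_eq_one] at hi
      have hss : s' = s := pi_inj hM (rdn t) (by rw [hi.2, hs])
      subst hss
      congr 1
      apply Fin.ext
      have := hi.1
      simp only []
      omega
  · -- blocks
    intro s t
    have hm1 := pi_mem hM (rup s) t
    have hm2 := pi_mem hM (rdn t) s
    refine ⟨(⟨M (rup s) t - 1, by omega⟩, ⟨M (rdn t) s - 1, by omega⟩), ?_, ?_⟩
    · exact (toA_eq_one hn M s _ t _).mpr
        ⟨by simp only [Fin.val_mk]; omega, by simp only [Fin.val_mk]; omega⟩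
    · rintro ⟨k, l⟩ hkl
      rw [toA_eq_one] at hkl
      have h1 := hkl.1
      have h2 := hkl.2
      simp only [] at h1 h2 ⊢
      refine Prod.ext ?_ ?_ <;> apply Fin.ext <;> simp only [] <;> omega


lemma toA_inj {n : ℕ} (hn : 0 < n) {M N : Fin (2 * n) → Fin n → ℕ}
    (hM : IsPiMatrix n M) (hN : IsPiMatrix n N)
    (h : toA n hn M = toA n hn N) : M = N := by
  funext r c
  by_cases hr : r.val < n
  · set s : Fin n := ⟨r.val, hr⟩ with hs
    have hrs : r = rup s := Fin.ext rfl
    have hm1 := pi_mem hM (rup s) c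
    have hm2 := pi_mem hM (rdn c) s
    have h1 : toA n hn M (idx n s ⟨M (rup s) c - 1, by omega⟩)
        (idx n c ⟨M (rdn c) s - 1, by omega⟩) = 1 :=
      (toA_eq_one hn M _ _ _ _).mpr
        ⟨by simp only [Fin.val_mk]; omega, by simp only [Fin.val_mk]; omega⟩
    rw [h] at h1
    have h2 := ((toA_eq_one hn N _ _ _ _).mp h1).1
    simp only [Fin.val_mk] at h2
    rw [hrs]
    omega
  · set t : Fin n := ⟨r.val - n, by have := r.isLt; omega⟩ with ht
    have hrt : r = rdn t := Fin.ext (by simp [rdn, ht]; omega)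
    have hm1 := pi_mem hM (rup c) t
    have hm2 := pi_mem hM (rdn t) c
    have h1 : toA n hn M (idx n c ⟨M (rup c) t - 1, by omega⟩)
        (idx n t ⟨M (rdn t) c - 1, by omega⟩) = 1 :=
      (toA_eq_one hn M _ _ _ _).mpr
        ⟨by simp only [Fin.val_mk]; omega, by simp only [Fin.val_mk]; omega⟩
    rw [h] at h1
    have h2 := ((toA_eq_one hn N _ _ _ _).mp h1).2
    simp only [Fin.val_mk] at h2
    rw [hrt]
    omega

lemma toA_surj {n : ℕ} (hn : 0 < n) {A : Fin (n ^ 2) → Fin (n ^ 2) → ℕ}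
    (hA : IsSPerm n A) : ∃ M, IsPiMatrix n M ∧ toA n hn M = A := by
  classical
  obtain ⟨hbin, hrow, hcol, hblk⟩ := hA
  choose B hB1 hBu using hblk
  set M : Fin (2 * n) → Fin n → ℕ := fun r c =>
    if h : r.val < n then ((B ⟨r.val, h⟩ c).1 : ℕ) + 1
    else ((B c ⟨r.val - n, by have := r.isLt; omega⟩).2 : ℕ) + 1 with hMdef
  have hMup : ∀ s c : Fin n, M (rup s) c = ((B s c).1 : ℕ) + 1 := by
    intro s c
    simp only [hMdef, rup, Fin.eta, dif_pos s.isLt]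
  have hMdn : ∀ t c : Fin n, M (rdn t) c = ((B c t).2 : ℕ) + 1 := by
    intro t c
    have h1 : ¬ (n + t.val < n) := by omega
    simp only [hMdef, rdn, dif_neg h1]
    congr 2
    apply Fin.ext
    simp
  have hpi : IsPiMatrix n M := by
    intro r
    apply Finset.eq_of_subset_of_card_le
    · intro m hm
      simp only [Finset.mem_image, Finset.mem_univ, true_and] at hm
      obtain ⟨c, rfl⟩ := hm
      simp only [hMdef]
      split_ifs with h
      · have := (B ⟨r.val, h⟩ c).1.isLt
        simp only [Finset.mem_Icc]; omega
      · have := (B c ⟨r.val - n, by have := r.isLt; omega⟩).2.isLt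
        simp only [Finset.mem_Icc]; omega
    · have hinj : Function.Injective (M r) := by
        by_cases hr : r.val < n
        · set s : Fin n := ⟨r.val, hr⟩ with hs
          have hrs : r = rup s := Fin.ext rfl
          intro a b hab
          rw [hrs, hMup, hMup] at hab
          have hke : (B s a).1 = (B s b).1 := Fin.ext (by omega)
          obtain ⟨j, -, hjun⟩ := hrow (idx n s (B s a).1)
          have ja := hjun _ (hB1 s a)
          have jb := hjun _ (by rw [hke]; exact hB1 s b)
          exact (idx_inj (ja.trans jb.symm)).1
        · set t : Fin n := ⟨r.val - n, by have := r.isLt; omega⟩ with ht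
          have hrt : r = rdn t := Fin.ext (by simp [rdn, ht]; omega)
          intro a b hab
          rw [hrt, hMdn, hMdn] at hab
          have hle : (B a t).2 = (B b t).2 := Fin.ext (by omega)
          obtain ⟨i, -, hiun⟩ := hcol (idx n t (B a t).2)
          have ia := hiun _ (hB1 a t)
          have ib := hiun _ (by rw [hle]; exact hB1 b t)
          exact (idx_inj (ia.trans ib.symm)).1
      rw [Finset.card_image_of_injective _ hinj]
      simp
  refine ⟨M, hpi, ?_⟩
  funext i j
  obtain ⟨s, k, rfl⟩ := exists_idx hn i
  obtain ⟨t, l, rfl⟩ := exists_idx hn j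
  have hiff : (M (rup s) t = k.val + 1 ∧ M (rdn t) s = l.val + 1) ↔ (k, l) = B s t := by
    rw [hMup, hMdn]
    constructor
    · rintro ⟨h1, h2⟩
      have hk : k = (B s t).1 := Fin.ext (by omega)
      have hl : l = (B s t).2 := Fin.ext (by omega)
      rw [hk, hl]
    · intro h
      have hk : k = (B s t).1 := congrArg Prod.fst h
      have hl : l = (B s t).2 := congrArg Prod.snd h
      rw [hk, hl]
      exact ⟨rfl, rfl⟩
  rw [toA_idx]
  split_ifs with hc
  · have h := hiff.mp hc
    have hk : k = (B s t).1 := congrArg Prod.fst h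
    have hl : l = (B s t).2 := congrArg Prod.snd h
    rw [hk, hl]
    exact (hB1 s t).symm
  · rcases hbin (idx n s k) (idx n t l) with h0 | h1
    · exact h0.symm
    · exact absurd (hiff.mpr (hBu s t (k, l) h1)) hc

end SPermAux

/-- There is a bijective map `φ` from `Π_n` to `Σ_{n²}` such that
two matrices `P, Q ∈ Π_n` are disjoint if and only if `φ(P)` and `φ(Q)` are
disjoint S-permutation matrices. -/


theorem exists_bijection_PiMatrix_SPerm (n : ℕ) (hn : 0 < n) :
    ∃ φ : {M : Fin (2 * n) → Fin n → ℕ // IsPiMatrix n M} →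
          {A : Fin (n ^ 2) → Fin (n ^ 2) → ℕ // IsSPerm n A},
      Function.Bijective φ ∧
      ∀ P Q, (PiDisjoint n P.val Q.val ↔ DisjointBin n (φ P).val (φ Q).val) := by
  classical
  open SPermAux in
  refine ⟨fun M => ⟨toA n hn M.val, toA_sperm hn M.prop⟩, ⟨?_, ?_⟩, ?_⟩
  · intro P Q h
    exact Subtype.ext (toA_inj hn P.prop Q.prop (congrArg Subtype.val h))
  · intro A
    obtain ⟨M, hM, hMA⟩ := toA_surj hn A.prop
    exact ⟨⟨M, hM⟩, Subtype.ext hMA⟩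
  · intro P Q
    constructor
    · intro hpq i j hij
      obtain ⟨s, k, rfl⟩ := exists_idx hn i
      obtain ⟨t, l, rfl⟩ := exists_idx hn j
      obtain ⟨h1, h2⟩ := hij
      rw [toA_eq_one] at h1 h2
      apply hpq
      refine ⟨s, t, ?_⟩
      show (P.val (rup s) t, P.val (rdn t) s) = (Q.val (rup s) t, Q.val (rdn t) s)
      rw [h1.1, h1.2, h2.1, h2.2]
    · intro hd hex
      obtain ⟨s, t, he⟩ := hex
      have he' : (P.val (rup s) t, P.val (rdn t) s) = (Q.val (rup s) t, Q.val (rdn t) s) := he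
      have e1 : P.val (rup s) t = Q.val (rup s) t := congrArg Prod.fst he'
      have e2 : P.val (rdn t) s = Q.val (rdn t) s := congrArg Prod.snd he'
      have hm1 := pi_mem P.prop (rup s) t
      have hm2 := pi_mem P.prop (rdn t) s
      apply hd (idx n s ⟨P.val (rup s) t - 1, by omega⟩)
        (idx n t ⟨P.val (rdn t) s - 1, by omega⟩)
      constructor
      · exact (toA_eq_one hn P.val _ _ _ _).mpr
          ⟨by simp only [Fin.val_mk]; omega, by simp only [Fin.val_mk]; omega⟩
      · exact (toA_eq_one hn Q.val _ _ _ _).mpr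
          ⟨by simp only [Fin.val_mk]; omega, by simp only [Fin.val_mk]; omega⟩
end

section
/- The number of 4×4 Sudoku matrices (case n = 2) equals 288. -/
set_option maxRecDepth 100000

/-! ### Auxiliary development -/

def dist4 (a b c d : Fin 4) : Prop := a ≠ b ∧ a ≠ c ∧ a ≠ d ∧ b ≠ c ∧ b ≠ d ∧ c ≠ d

instance : ∀ a b c d, Decidable (dist4 a b c d) := fun _ _ _ _ => by
  unfold dist4; infer_instance

abbrev SRow := {r : Fin 4 → Fin 4 // dist4 (r 0) (r 1) (r 2) (r 3)}

def blk (ra rb : SRow) : Prop :=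
  dist4 (ra.1 0) (ra.1 1) (rb.1 0) (rb.1 1) ∧ dist4 (ra.1 2) (ra.1 3) (rb.1 2) (rb.1 3)

def cols (r0 r1 r2 r3 : SRow) : Prop := ∀ j, dist4 (r0.1 j) (r1.1 j) (r2.1 j) (r3.1 j)

instance : ∀ ra rb, Decidable (blk ra rb) := fun _ _ => by unfold blk; infer_instance
instance : ∀ r0 r1 r2 r3, Decidable (cols r0 r1 r2 r3) := fun _ _ _ _ => by
  unfold cols; infer_instance

def Good (q : SRow × SRow × SRow × SRow) : Prop :=
  blk q.1 q.2.1 ∧ blk q.2.2.1 q.2.2.2 ∧ cols q.1 q.2.1 q.2.2.1 q.2.2.2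

instance : DecidablePred Good := fun _ => by unfold Good; infer_instance

lemma row_iff (f : Fin 4 → Fin 4) :
    Finset.image f Finset.univ = Finset.univ ↔ dist4 (f 0) (f 1) (f 2) (f 3) := by
  revert f; decide

lemma blk_iff (g : Fin 2 × Fin 2 → Fin 4) :
    Finset.image g Finset.univ = Finset.univ ↔
      dist4 (g (0,0)) (g (0,1)) (g (1,0)) (g (1,1)) := by
  revert g; decide

lemma icc_eq : Finset.Icc 1 4 = Finset.image (fun k : Fin 4 => (k:ℕ)+1) Finset.univ := by
  decide

lemma nat_iff {α : Type} [Fintype α] [DecidableEq α] (f : α → Fin 4) :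
    Finset.image (fun x => ((f x : ℕ) + 1)) Finset.univ = Finset.Icc 1 4 ↔
    Finset.image f Finset.univ = Finset.univ := by
  have hv : Function.Injective (fun k : Fin 4 => (k : ℕ) + 1) := by
    intro a b h; simp at h; exact Fin.val_injective h
  rw [icc_eq, show (Finset.image (fun x => ((f x : ℕ) + 1)) Finset.univ)
      = Finset.image (fun k : Fin 4 => (k:ℕ)+1) (Finset.image f Finset.univ) by
        rw [Finset.image_image]; rfl]
  exact (Finset.image_injective hv).eq_iff

/-- The matrix associated to a quadruple of rows. -/
def matQ (q : SRow × SRow × SRow × SRow) : Fin (2^2) → Fin (2^2) → ℕ :=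
  fun i j => ((![q.1.1, q.2.1.1, q.2.2.1.1, q.2.2.2.1] i) j : ℕ) + 1

lemma matQ_isSudoku (q : SRow × SRow × SRow × SRow) (hq : Good q) : IsSudoku 2 (matQ q) := by
  obtain ⟨⟨r0, h0⟩, ⟨r1, h1⟩, ⟨r2, h2⟩, ⟨r3, h3⟩⟩ := q
  obtain ⟨⟨hb00, hb01⟩, ⟨hb10, hb11⟩, hc⟩ := hq
  refine ⟨?_, ?_, ?_⟩
  · intro i
    exact (nat_iff _).mpr ((row_iff _).mpr (by fin_cases i <;> assumption))
  · intro j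
    exact (nat_iff _).mpr ((row_iff _).mpr (hc j))
  · intro s t
    refine (nat_iff (fun kl : Fin 2 × Fin 2 =>
      (![r0, r1, r2, r3] (idx 2 s kl.1)) (idx 2 t kl.2))).mpr ((blk_iff _).mpr ?_)
    fin_cases s <;> fin_cases t <;> assumption

lemma mem_bounds {P : Fin (2^2) → Fin (2^2) → ℕ} (h : IsSudoku 2 P) (i j) :
    1 ≤ P i j ∧ P i j ≤ 4 := by
  have h2 : P i j ∈ Finset.Icc 1 (2^2) :=
    (h.1 i) ▸ Finset.mem_image_of_mem _ (Finset.mem_univ j)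
  rw [Finset.mem_Icc] at h2
  exact ⟨h2.1, by simpa using h2.2⟩

def Qof (P : Fin (2^2) → Fin (2^2) → ℕ) (h : IsSudoku 2 P) (i j : Fin (2^2)) : Fin 4 :=
  ⟨P i j - 1, by have := mem_bounds h i j; omega⟩

lemma Qof_succ (P : Fin (2^2) → Fin (2^2) → ℕ) (h : IsSudoku 2 P) (i j) :
    ((Qof P h i j : ℕ) + 1) = P i j := by
  have := mem_bounds h i j; simp only [Qof]; omega

lemma hrow (P : Fin (2^2) → Fin (2^2) → ℕ) (hP : IsSudoku 2 P) (i) :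
    dist4 (Qof P hP i 0) (Qof P hP i 1) (Qof P hP i 2) (Qof P hP i 3) := by
  have himg : Finset.image (fun j => ((Qof P hP i j : ℕ)+1)) Finset.univ = Finset.Icc 1 4 := by
    have he : (fun j => ((Qof P hP i j : ℕ)+1)) = P i := funext (Qof_succ P hP i)
    rw [he]; exact hP.1 i
  exact (row_iff _).mp ((nat_iff _).mp himg)

lemma hcol (P : Fin (2^2) → Fin (2^2) → ℕ) (hP : IsSudoku 2 P) (j) :
    dist4 (Qof P hP 0 j) (Qof P hP 1 j) (Qof P hP 2 j) (Qof P hP 3 j) := by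
  have himg : Finset.image (fun i => ((Qof P hP i j : ℕ)+1)) Finset.univ = Finset.Icc 1 4 := by
    have he : (fun i => ((Qof P hP i j : ℕ)+1)) = fun i => P i j :=
      funext (fun i => Qof_succ P hP i j)
    rw [he]; exact hP.2.1 j
  exact (row_iff _).mp ((nat_iff _).mp himg)

lemma hblock (P : Fin (2^2) → Fin (2^2) → ℕ) (hP : IsSudoku 2 P) (s t : Fin 2) :
    dist4 (Qof P hP (idx 2 s 0) (idx 2 t 0)) (Qof P hP (idx 2 s 0) (idx 2 t 1))
      (Qof P hP (idx 2 s 1) (idx 2 t 0)) (Qof P hP (idx 2 s 1) (idx 2 t 1)) := by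
  have himg : Finset.image
      (fun kl : Fin 2 × Fin 2 => ((Qof P hP (idx 2 s kl.1) (idx 2 t kl.2) : ℕ)+1))
      Finset.univ = Finset.Icc 1 4 := by
    have he : (fun kl : Fin 2 × Fin 2 => ((Qof P hP (idx 2 s kl.1) (idx 2 t kl.2) : ℕ)+1))
        = fun kl : Fin 2 × Fin 2 => P (idx 2 s kl.1) (idx 2 t kl.2) :=
      funext (fun kl => Qof_succ P hP _ _)
    rw [he]; exact hP.2.2 s t
  exact (blk_iff _).mp ((nat_iff _).mp himg)

def bwd (q : {q : SRow × SRow × SRow × SRow // Good q}) :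
    {P : Fin (2 ^ 2) → Fin (2 ^ 2) → ℕ // IsSudoku 2 P} :=
  ⟨matQ q.1, matQ_isSudoku q.1 q.2⟩

lemma bwd_bijective : Function.Bijective bwd := by
  constructor
  · rintro ⟨⟨⟨r0, h0⟩, ⟨r1, h1⟩, ⟨r2, h2⟩, ⟨r3, h3⟩⟩, hg⟩
      ⟨⟨⟨s0, g0⟩, ⟨s1, g1⟩, ⟨s2, g2⟩, ⟨s3, g3⟩⟩, hg'⟩ h
    simp only [bwd, Subtype.mk.injEq] at h
    simp only [Subtype.mk.injEq, Prod.mk.injEq]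
    refine ⟨?_, ?_, ?_, ?_⟩ <;> funext j
    · have hj : ((r0 j : ℕ) + 1) = ((s0 j : ℕ) + 1) := congrFun (congrFun h 0) j
      exact Fin.val_injective (by omega)
    · have hj : ((r1 j : ℕ) + 1) = ((s1 j : ℕ) + 1) := congrFun (congrFun h 1) j
      exact Fin.val_injective (by omega)
    · have hj : ((r2 j : ℕ) + 1) = ((s2 j : ℕ) + 1) := congrFun (congrFun h 2) j
      exact Fin.val_injective (by omega)
    · have hj : ((r3 j : ℕ) + 1) = ((s3 j : ℕ) + 1) := congrFun (congrFun h 3) j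
      exact Fin.val_injective (by omega)
  · rintro ⟨P, hP⟩
    refine ⟨⟨(⟨fun j => Qof P hP 0 j, hrow P hP 0⟩, ⟨fun j => Qof P hP 1 j, hrow P hP 1⟩,
      ⟨fun j => Qof P hP 2 j, hrow P hP 2⟩, ⟨fun j => Qof P hP 3 j, hrow P hP 3⟩),
      ⟨⟨hblock P hP 0 0, hblock P hP 0 1⟩, ⟨hblock P hP 1 0, hblock P hP 1 1⟩,
        fun j => hcol P hP j⟩⟩, ?_⟩
    apply Subtype.ext
    funext i j
    fin_cases i
    · exact Qof_succ P hP _ j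
    · exact Qof_succ P hP _ j
    · exact Qof_succ P hP _ j
    · exact Qof_succ P hP _ j

set_option maxHeartbeats 16000000 in
lemma count_good : (∑ r0 : SRow, ∑ r1 : SRow, if blk r0 r1 then
    (∑ r2 : SRow, ∑ r3 : SRow, if blk r2 r3 then (if cols r0 r1 r2 r3 then 1 else 0) else 0)
    else 0) = 288 := by decide

lemma card_good : Fintype.card {q : SRow × SRow × SRow × SRow // Good q} = 288 := by
  rw [Fintype.card_subtype, Finset.card_filter]
  simp only [Fintype.sum_prod_type]
  have step : ∀ r0 r1 : SRow,
      (∑ r2 : SRow, ∑ r3 : SRow, if Good (r0, r1, r2, r3) then (1:ℕ) else 0)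
      = if blk r0 r1 then (∑ r2 : SRow, ∑ r3 : SRow,
          if blk r2 r3 then (if cols r0 r1 r2 r3 then 1 else 0) else 0) else 0 := by
    intro r0 r1
    by_cases h01 : blk r0 r1
    · rw [if_pos h01]
      refine Finset.sum_congr rfl fun r2 _ => Finset.sum_congr rfl fun r3 _ => ?_
      by_cases h23 : blk r2 r3 <;> by_cases hc : cols r0 r1 r2 r3 <;>
        simp [Good, h01, h23, hc]
    · rw [if_neg h01]
      refine Finset.sum_eq_zero fun r2 _ => Finset.sum_eq_zero fun r3 _ => ?_
      simp [Good, h01]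
  calc (∑ r0 : SRow, ∑ r1 : SRow, ∑ r2 : SRow, ∑ r3 : SRow,
        if Good (r0, r1, r2, r3) then (1:ℕ) else 0)
      = ∑ r0 : SRow, ∑ r1 : SRow, if blk r0 r1 then (∑ r2 : SRow, ∑ r3 : SRow,
          if blk r2 r3 then (if cols r0 r1 r2 r3 then 1 else 0) else 0) else 0 :=
        Finset.sum_congr rfl fun r0 _ => Finset.sum_congr rfl fun r1 _ => step r0 r1
    _ = 288 := count_good

/-- The number of `4 × 4` Sudoku matrices (case `n = 2`)
equals `288`. -/
theorem card_sudoku_two :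
    Nat.card {P : Fin (2 ^ 2) → Fin (2 ^ 2) → ℕ // IsSudoku 2 P} = 288 := by
  calc Nat.card {P : Fin (2 ^ 2) → Fin (2 ^ 2) → ℕ // IsSudoku 2 P}
      = Nat.card {q : SRow × SRow × SRow × SRow // Good q} :=
        (Nat.card_eq_of_bijective bwd bwd_bijective).symm
    _ = Fintype.card {q : SRow × SRow × SRow × SRow // Good q} := Nat.card_eq_fintype_card
    _ = 288 := card_good
end
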